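/- Suppose X and Y partition ℕ, with x and y their increasing enumerations (0-indexed), and suppose x(x(n)) = 2·x(n), y(y(n)) = 2·y(n), and |x(n) − y(n)| = 1 for all n. Then either x = a and y = b, or x = b and y = a, where a and b are the increasing enumerations of the odious and evil numbers. -/
import Mathlib


/-- Sum of base-`d` digits of `n`. -/
def sdig (d n : ℕ) : ℕ := (Nat.digits d n).sum

/-- `t_d(n)`: base-`d` digit sum of `n`, reduced mod `d`. -/
def td (d n : ℕ) : ℕ := sdig d n % d

/-- `a_{j,d}(n)`: n-th natural (0-indexed, increasing) with base-`d` digit sum ≡ j mod d. -/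
noncomputable def agen (d j n : ℕ) : ℕ := Nat.nth (fun k => sdig d k % d = j) n

/-- n-th odious number (binary digit sum odd), 0-indexed increasing. -/
noncomputable def odious (n : ℕ) : ℕ := Nat.nth (fun k => (Nat.digits 2 k).sum % 2 = 1) n

/-- n-th evil number (binary digit sum even), 0-indexed increasing. -/
noncomputable def evil (n : ℕ) : ℕ := Nat.nth (fun k => (Nat.digits 2 k).sum % 2 = 0) n

/-- Thue–Morse sequence: parity of the binary digit sum. -/
def tm (n : ℕ) : ℕ := (Nat.digits 2 n).sum % 2

lemma tm_le (n : ℕ) : tm n ≤ 1 := by unfold tm; omega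

lemma tm_two_mul (n : ℕ) : tm (2 * n) = tm n := by
  rcases Nat.eq_zero_or_pos n with rfl | h
  · rfl
  · unfold tm
    rw [Nat.digits_def' (by norm_num : (1:ℕ) < 2) (by omega)]
    have h1 : (2 * n) % 2 = 0 := by omega
    have h2 : (2 * n) / 2 = n := by omega
    rw [h1, h2]
    simp

lemma tm_two_mul_add_one (n : ℕ) : tm (2 * n + 1) = (tm n + 1) % 2 := by
  unfold tm
  rw [Nat.digits_def' (by norm_num : (1:ℕ) < 2) (by omega)]
  have h1 : (2 * n + 1) % 2 = 1 := by omega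
  have h2 : (2 * n + 1) / 2 = n := by omega
  rw [h1, h2]
  simp [List.sum_cons]
  omega

lemma strictMono_range_eq {f g : ℕ → ℕ} (hf : StrictMono f) (hg : StrictMono g)
    (h : Set.range f = Set.range g) : f = g := by
  funext n
  induction n using Nat.strong_induction_on with
  | _ n IH =>
  obtain ⟨m, hm⟩ : f n ∈ Set.range g := h ▸ Set.mem_range_self n
  rcases lt_trichotomy m n with h1 | h1 | h1
  · have h2 := IH m h1
    have h3 : f m = f n := by rw [h2, hm]
    exact absurd (hf.injective h3) (by omega)
  · subst h1
    exact hm.symm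
  · exfalso
    have hlt : g n < f n := by rw [← hm]; exact hg h1
    obtain ⟨j, hj⟩ : g n ∈ Set.range f := h.symm ▸ Set.mem_range_self n
    have hjn : j < n := by
      have : f j < f n := by rw [hj]; exact hlt
      exact hf.lt_iff_lt.mp this
    have h2 := IH j hjn
    have h3 : g j = g n := by rw [← h2, hj]
    exact absurd (hg.injective h3) (by omega)

lemma strictMono_evilFun : StrictMono (fun n => 2 * n + tm n) := by
  apply strictMono_nat_of_lt_succ
  intro n
  have h1 := tm_le n
  have h2 := tm_le (n + 1)
  show 2 * n + tm n < 2 * (n + 1) + tm (n + 1)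
  omega

lemma strictMono_odiousFun : StrictMono (fun n => 2 * n + (1 - tm n)) := by
  apply strictMono_nat_of_lt_succ
  intro n
  have h1 := tm_le n
  have h2 := tm_le (n + 1)
  show 2 * n + (1 - tm n) < 2 * (n + 1) + (1 - tm (n + 1))
  omega

lemma range_evilFun : Set.range (fun n => 2 * n + tm n) = {k | tm k = 0} := by
  ext k
  simp only [Set.mem_range, Set.mem_setOf_eq]
  constructor
  · rintro ⟨n, rfl⟩
    have h := tm_le n
    have h0 : tm n = 0 ∨ tm n = 1 := by omega
    rcases h0 with h0 | h0
    · rw [h0]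
      simpa using (tm_two_mul n).trans h0
    · rw [h0]
      have h1 := tm_two_mul_add_one n
      rw [h0] at h1
      simpa using h1
  · intro hk
    rcases Nat.even_or_odd k with ⟨m, hm⟩ | ⟨m, hm⟩
    · refine ⟨m, ?_⟩
      have h1 : tm (2 * m) = tm m := tm_two_mul m
      have h2 : k = 2 * m := by omega
      rw [h2] at hk
      rw [h1] at hk
      omega
    · refine ⟨m, ?_⟩
      have h1 := tm_two_mul_add_one m
      rw [hm] at hk
      rw [h1] at hk
      have := tm_le m
      omega

lemma range_odiousFun : Set.range (fun n => 2 * n + (1 - tm n)) = {k | tm k = 1} := by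
  ext k
  simp only [Set.mem_range, Set.mem_setOf_eq]
  constructor
  · rintro ⟨n, rfl⟩
    have h := tm_le n
    have h0 : tm n = 0 ∨ tm n = 1 := by omega
    rcases h0 with h0 | h0
    · rw [h0]
      have h1 := tm_two_mul_add_one n
      rw [h0] at h1
      simpa using h1
    · rw [h0]
      simpa using (tm_two_mul n).trans h0
  · intro hk
    rcases Nat.even_or_odd k with ⟨m, hm⟩ | ⟨m, hm⟩
    · refine ⟨m, ?_⟩
      have h1 : tm (2 * m) = tm m := tm_two_mul m
      have h2 : k = 2 * m := by omega
      rw [h2] at hk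
      rw [h1] at hk
      omega
    · refine ⟨m, ?_⟩
      have h1 := tm_two_mul_add_one m
      rw [hm] at hk
      rw [h1] at hk
      have := tm_le m
      omega

lemma evil_eq : evil = fun n => 2 * n + tm n := by
  have hinf : {k | tm k = 0}.Infinite := by
    rw [← range_evilFun]
    exact Set.infinite_range_of_injective strictMono_evilFun.injective
  have hinf' : (setOf fun k => (Nat.digits 2 k).sum % 2 = 0).Infinite := hinf
  have h1 : StrictMono evil := Nat.nth_strictMono hinf'
  have h2 : Set.range evil = {k | tm k = 0} :=
    Nat.range_nth_of_infinite hinf'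
  exact strictMono_range_eq h1 strictMono_evilFun (h2.trans range_evilFun.symm)

lemma odious_eq : odious = fun n => 2 * n + (1 - tm n) := by
  have hinf : {k | tm k = 1}.Infinite := by
    rw [← range_odiousFun]
    exact Set.infinite_range_of_injective strictMono_odiousFun.injective
  have hinf' : (setOf fun k => (Nat.digits 2 k).sum % 2 = 1).Infinite := hinf
  have h1 : StrictMono odious := Nat.nth_strictMono hinf'
  have h2 : Set.range odious = {k | tm k = 1} :=
    Nat.range_nth_of_infinite hinf'
  exact strictMono_range_eq h1 strictMono_odiousFun (h2.trans range_odiousFun.symm)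

lemma pairA (X Y : Set ℕ) (hunion : X ∪ Y = Set.univ) (hdisj : X ∩ Y = ∅)
    (x y : ℕ → ℕ) (hx : StrictMono x) (hy : StrictMono y)
    (hxX : Set.range x = X) (hyY : Set.range y = Y)
    (hdiff : ∀ n, |(x n : ℤ) - y n| = 1) :
    ∀ n, (x n = 2*n ∧ y n = 2*n+1) ∨ (x n = 2*n+1 ∧ y n = 2*n) := by
  have hdisj' : ∀ i j, x i ≠ y j := by
    intro i j h
    have h1 : x i ∈ X := hxX ▸ Set.mem_range_self i
    have h2 : x i ∈ Y := hyY ▸ (h ▸ Set.mem_range_self j)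
    have h3 : x i ∈ X ∩ Y := ⟨h1, h2⟩
    rw [hdisj] at h3
    exact h3
  intro n
  induction n using Nat.strong_induction_on with
  | _ n IH =>
  have hxlb : 2*n ≤ x n := by
    rcases Nat.eq_zero_or_pos n with rfl | hn
    · omega
    · obtain ⟨k, rfl⟩ : ∃ k, n = k + 1 := ⟨n - 1, by omega⟩
      have h1 := hx (show k < k + 1 by omega)
      have h2 := hdisj' (k+1) k
      rcases IH k (by omega) with ⟨ha, hb⟩ | ⟨ha, hb⟩ <;> omega
  have hylb : 2*n ≤ y n := by
    rcases Nat.eq_zero_or_pos n with rfl | hn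
    · omega
    · obtain ⟨k, rfl⟩ : ∃ k, n = k + 1 := ⟨n - 1, by omega⟩
      have h1 := hy (show k < k + 1 by omega)
      have h2 := hdisj' k (k+1)
      rcases IH k (by omega) with ⟨ha, hb⟩ | ⟨ha, hb⟩ <;> omega
  have hd : (x n : ℤ) - y n = 1 ∨ (x n : ℤ) - y n = -1 :=
    (abs_eq (by norm_num : (0:ℤ) ≤ 1)).mp (hdiff n)
  have hne : x n ≠ y n := hdisj' n n
  have h2n : (2*n : ℕ) ∈ X ∪ Y := by rw [hunion]; trivial
  rcases h2n with h2n | h2n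
  · obtain ⟨m, hm⟩ : 2*n ∈ Set.range x := hxX ▸ h2n
    have hmn : m = n := by
      rcases lt_trichotomy m n with h | h | h
      · rcases IH m h with ⟨ha, _⟩ | ⟨ha, _⟩ <;> omega
      · exact h
      · have := hx h
        omega
    subst hmn
    left
    omega
  · obtain ⟨m, hm⟩ : 2*n ∈ Set.range y := hyY ▸ h2n
    have hmn : m = n := by
      rcases lt_trichotomy m n with h | h | h
      · rcases IH m h with ⟨_, ha⟩ | ⟨_, ha⟩ <;> omega
      · exact h
      · have := hy h
        omega
    subst hmn
    right
    omega

lemma keyL (x y : ℕ → ℕ)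
    (hxx : ∀ n, x (x n) = 2 * x n) (hyy : ∀ n, y (y n) = 2 * y n)
    (A : ∀ n, (x n = 2*n ∧ y n = 2*n+1) ∨ (x n = 2*n+1 ∧ y n = 2*n))
    (hx0 : x 0 = 0) :
    ∀ n, x n = 2*n + tm n ∧ y n = 2*n + (1 - tm n) := by
  intro n
  induction n using Nat.strong_induction_on with
  | _ n IH =>
  rcases Nat.eq_zero_or_pos n with rfl | hn
  · have ht0 : tm 0 = 0 := by simp [tm]
    rcases A 0 with ⟨h1, h2⟩ | ⟨h1, h2⟩ <;> rw [ht0] <;> omega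
  · obtain ⟨m, hnm, hmlt⟩ : ∃ m, (n = 2*m ∨ n = 2*m+1) ∧ m < n :=
      ⟨n / 2, by omega, Nat.div_lt_self hn (by norm_num)⟩
    obtain ⟨hxm, hym⟩ := IH m hmlt
    have htm := tm_le m
    have hx2m := hxx m
    have hy2m := hyy m
    have hA2 := A (2*m)
    have hA2' := A (2*m+1)
    have ht2 : tm (2*m) = tm m := tm_two_mul m
    have ht2' : tm (2*m+1) = (tm m + 1) % 2 := tm_two_mul_add_one m
    have h01 : tm m = 0 ∨ tm m = 1 := by omega
    rcases h01 with h | h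
    · have hxm' : x m = 2*m := by omega
      have hym' : y m = 2*m+1 := by omega
      rw [hxm'] at hx2m
      rw [hym'] at hy2m
      rcases hnm with rfl | rfl
      · rw [ht2, h]
        rcases hA2 with ⟨h1, h2⟩ | ⟨h1, h2⟩ <;> omega
      · rw [ht2', h]
        rcases hA2' with ⟨h1, h2⟩ | ⟨h1, h2⟩ <;> omega
    · have hxm' : x m = 2*m+1 := by omega
      have hym' : y m = 2*m := by omega
      rw [hxm'] at hx2m
      rw [hym'] at hy2m
      rcases hnm with rfl | rfl
      · rw [ht2, h]
        rcases hA2 with ⟨h1, h2⟩ | ⟨h1, h2⟩ <;> omega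
      · rw [ht2', h]
        rcases hA2' with ⟨h1, h2⟩ | ⟨h1, h2⟩ <;> omega

theorem stmt19 (X Y : Set ℕ) (hunion : X ∪ Y = Set.univ) (hdisj : X ∩ Y = ∅)
    (x y : ℕ → ℕ) (hx : StrictMono x) (hy : StrictMono y)
    (hxX : Set.range x = X) (hyY : Set.range y = Y)
    (hxx : ∀ n, x (x n) = 2 * x n) (hyy : ∀ n, y (y n) = 2 * y n)
    (hdiff : ∀ n, |(x n : ℤ) - y n| = 1) :
    (x = odious ∧ y = evil) ∨ (x = evil ∧ y = odious) := by
  have A := pairA X Y hunion hdisj x y hx hy hxX hyY hdiff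
  have A' : ∀ n, (y n = 2*n ∧ x n = 2*n+1) ∨ (y n = 2*n+1 ∧ x n = 2*n) := by
    intro n
    rcases A n with ⟨h1, h2⟩ | ⟨h1, h2⟩
    · right; exact ⟨h2, h1⟩
    · left; exact ⟨h2, h1⟩
  rcases A 0 with ⟨h1, h2⟩ | ⟨h1, h2⟩
  · have key := keyL x y hxx hyy A (by omega)
    right
    constructor
    · funext n
      rw [evil_eq]
      exact (key n).1
    · funext n
      rw [odious_eq]
      exact (key n).2
  · have key := keyL y x hyy hxx A' (by omega)
    left
    constructor
    · funext n
      rw [odious_eq]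
      exact (key n).2
    · funext n
      rw [evil_eq]
      exact (key n).1
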